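/- For every scoring matrix γ, the extended edit distance satisfies the triangle inequality unconditionally: edist_γ(s,u) ≤ edist_γ(s,t) + edist_γ(t,u) for all s,t,u ∈ Σ*. -/

import Mathlib

open List

/-- A scoring matrix on alphabet `σ`; `none` represents the space symbol `‐`.
The value at `(none, none)` is irrelevant (never used on admissible columns). -/
abbrev Scoring (σ : Type*) := Option σ → Option σ → ℝ

/-- `A` is an alignment of the sequences `s` and `t`: a list of columns over
`Σ₋ × Σ₋` with no column `(‐,‐)`, whose first (resp. second) components with
spaces removed spell `s` (resp. `t`). -/
def IsAlignment {σ : Type*} (A : List (Option σ × Option σ)) (s t : List σ) : Prop :=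
  (∀ c ∈ A, c ≠ ((none : Option σ), (none : Option σ))) ∧
  A.filterMap Prod.fst = s ∧ A.filterMap Prod.snd = t

/-- The score of an alignment: the sum of `γ` over its columns. -/
def alignScore {σ : Type*} (γ : Scoring σ) (A : List (Option σ × Option σ)) : ℝ :=
  (A.map fun c => γ c.1 c.2).sum

/-- The weighted edit distance: minimum alignment score. -/
noncomputable def editDist {σ : Type*} (γ : Scoring σ) (s t : List σ) : ℝ :=
  sInf {x | ∃ A, IsAlignment A s t ∧ alignScore γ A = x}

/-- The normalized edit distance: minimum normalized alignment score
(score divided by number of columns); for `s = t = ε` it is `0`. -/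
noncomputable def ndist {σ : Type*} (γ : Scoring σ) (s t : List σ) : ℝ :=
  sInf {x | ∃ A, IsAlignment A s t ∧ alignScore γ A / (A.length : ℝ) = x}

/-- A walk in the digraph `D(γ)`: a list of vertices of `Σ₋` in which the
space `‐` never follows the space. -/
def IsWalkSeq {σ : Type*} (W : List (Option σ)) : Prop :=
  W.Chain' (fun a b => ¬(a = none ∧ b = none))

/-- The weight of a walk: the sum of the weights of its consecutive arcs. -/
def walkWeight {σ : Type*} (γ : Scoring σ) (W : List (Option σ)) : ℝ :=
  ((W.zip W.tail).map fun p => γ p.1 p.2).sum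

/-- `D(γ)` has a cycle of negative total weight (cycles start and end at a
vertex of `Σ`). -/
def HasNegCycle {σ : Type*} (γ : Scoring σ) : Prop :=
  ∃ (a : σ) (W : List (Option σ)),
    IsWalkSeq (some a :: (W ++ [some a])) ∧
    walkWeight γ (some a :: (W ++ [some a])) < 0

/-- The shortest-walk distance from `x` to `y` in `D(γ)`. -/
noncomputable def walkDist {σ : Type*} (γ : Scoring σ) (x y : Option σ) : ℝ :=
  sInf {w | ∃ W : List (Option σ), IsWalkSeq W ∧ W.head? = some x ∧
    W.getLast? = some y ∧ walkWeight γ W = w}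

/-- A column of an extended alignment: a nonempty sequence over `Σ₋`, with at
least one non-space symbol, no two consecutive spaces, and not having a space
at both ends. -/
def IsExtCol {σ : Type*} (c : List (Option σ)) : Prop :=
  c ≠ [] ∧ (∃ x ∈ c, x ≠ none) ∧
  c.Chain' (fun a b => ¬(a = none ∧ b = none)) ∧
  ¬(c.head? = some none ∧ c.getLast? = some none)

/-- An extended alignment of `s, t`: a list of admissible columns whose first
symbols (spaces removed) spell `s` and whose last symbols spell `t`. -/
def IsExtAlignment {σ : Type*} (E : List (List (Option σ))) (s t : List σ) : Prop :=
  (∀ c ∈ E, IsExtCol c) ∧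
  E.filterMap (fun c => c.head?.bind id) = s ∧
  E.filterMap (fun c => c.getLast?.bind id) = t

/-- The extended edit distance: minimum total score over extended alignments,
where the score of a column is the sum of `γ` over its consecutive pairs. -/
noncomputable def edist {σ : Type*} (γ : Scoring σ) (s t : List σ) : ℝ :=
  sInf {x | ∃ E, IsExtAlignment E s t ∧ (E.map (walkWeight γ)).sum = x}

/-- `f` is a premetric: `f x x = 0` and `f x y ≥ 0`. -/
def IsPremetric {σ : Type*} (f : List σ → List σ → ℝ) : Prop :=
  (∀ s, f s s = 0) ∧ (∀ s t, 0 ≤ f s t)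

/-!
Compose an extended alignment of `s, t` with one of `t, u` by gluing each column that ends in a
letter of `t` to the column of the second alignment that starts with it: the weights add up, and
the resulting columns spell `s` on top and `u` at the bottom. Some of them may begin and end with a
space; these are closed walks in `D(γ)` and can be dropped if `D(γ)` has no negative cycle. In
that case every score is also bounded below (removing closed subwalks shortens a walk without
increasing its weight), so the infima behave and the triangle inequality follows. If `D(γ)` has a
negative cycle, pumping it inside one column makes every score set with a nonempty argument
unbounded below, so every `edist` is `0` and the inequality is trivial.
-/

theorem List.exists_eq_append_cons_append_cons_of_not_nodup {α : Type*} {l : List α}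
    (h : ¬l.Nodup) : ∃ x l₁ l₂ l₃, l = l₁ ++ x :: (l₂ ++ x :: l₃) := by
  obtain ⟨x, hx⟩ : ∃ x, [x, x] <+ l := by simpa [List.nodup_iff_sublist] using h
  obtain ⟨r₁, r₂, rfl, h₁, h₂⟩ := List.cons_sublist_iff.mp hx
  obtain ⟨l₁, l₂, rfl⟩ := List.append_of_mem h₁
  obtain ⟨l₂', l₃, rfl⟩ := List.append_of_mem (List.singleton_sublist.mp h₂)
  exact ⟨x, l₁, l₂ ++ l₂', l₃, by simp⟩

theorem List.length_le_length_filterMap_add {α β : Type*} {f g : α → Option β} {l : List α}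
    (h : ∀ x ∈ l, f x ≠ none ∨ g x ≠ none) :
    l.length ≤ (l.filterMap f).length + (l.filterMap g).length := by
  induction l with
  | nil => simp
  | cons x l ih =>
    have := ih fun y hy => h y (List.mem_cons_of_mem x hy)
    have hx := h x List.mem_cons_self
    cases hf : f x <;> cases hg : g x <;> simp_all <;> omega

section

variable {σ : Type*}

section Walks

variable {γ : Scoring σ}

theorem isWalkSeq_iff_isChain {W : List (Option σ)} :
    IsWalkSeq W ↔ W.IsChain (fun a b => ¬(a = none ∧ b = none)) := Iff.rfl

theorem IsWalkSeq.glue {l₁ l₂ : List (Option σ)} {x : Option σ} (h₁ : IsWalkSeq (l₁ ++ [x]))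
    (h₂ : IsWalkSeq (x :: l₂)) : IsWalkSeq (l₁ ++ x :: l₂) := by
  have := List.IsChain.append_overlap h₁ h₂ (List.cons_ne_nil x [])
  rwa [List.append_assoc, List.singleton_append] at this

theorem IsWalkSeq.infix {W V : List (Option σ)} (hW : IsWalkSeq W) (h : V <:+: W) :
    IsWalkSeq V :=
  List.IsChain.infix hW h

@[simp]
theorem walkWeight_nil : walkWeight γ [] = 0 := rfl

@[simp]
theorem walkWeight_singleton (x : Option σ) : walkWeight γ [x] = 0 := rfl

@[simp]
theorem walkWeight_cons_cons (a b : Option σ) (l : List (Option σ)) :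
    walkWeight γ (a :: b :: l) = γ a b + walkWeight γ (b :: l) := by
  simp [walkWeight]

theorem walkWeight_append_cons (l₁ l₂ : List (Option σ)) (x : Option σ) :
    walkWeight γ (l₁ ++ x :: l₂) = walkWeight γ (l₁ ++ [x]) + walkWeight γ (x :: l₂) := by
  induction l₁ with
  | nil => simp
  | cons a l ih =>
    cases l with
    | nil => simp
    | cons b l =>
      simp only [List.cons_append, walkWeight_cons_cons] at ih ⊢
      rw [ih, add_assoc]

/-- A closed walk through the gap symbol can be rotated to start at a letter. -/
theorem walkWeight_nonneg_of_closed (hC : ¬HasNegCycle γ) {z : Option σ} {v : List (Option σ)}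
    (h : IsWalkSeq (z :: (v ++ [z]))) : 0 ≤ walkWeight γ (z :: (v ++ [z])) := by
  by_contra hneg
  cases z with
  | some a => exact hC ⟨a, v, h, by linarith⟩
  | none =>
    obtain ⟨b, v, rfl⟩ : ∃ b v', v = some b :: v' := by
      obtain _ | ⟨_ | b, v⟩ := v <;> simp_all [isWalkSeq_iff_isChain]
    have hrot : walkWeight γ (some b :: (v ++ [none] ++ [some b])) =
        walkWeight γ (none :: (some b :: v ++ [none])) := by
      rw [List.append_assoc, List.singleton_append, ← List.cons_append, walkWeight_append_cons]
      simp [add_comm]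
    refine hC ⟨b, v ++ [none], ?_, by rw [hrot]; linarith⟩
    simpa using IsWalkSeq.glue (h.infix (List.suffix_cons _ _).isInfix)
      (by simp [isWalkSeq_iff_isChain] : IsWalkSeq [none, some b])

end Walks

section LowerBound

variable {γ : Scoring σ}

theorem walkWeight_shortcut_le (hC : ¬HasNegCycle γ) {l₁ l₂ l₃ : List (Option σ)}
    {x : Option σ} (h : IsWalkSeq (l₁ ++ x :: (l₂ ++ x :: l₃))) :
    walkWeight γ (l₁ ++ x :: l₃) ≤ walkWeight γ (l₁ ++ x :: (l₂ ++ x :: l₃)) := by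
  have hcycle : 0 ≤ walkWeight γ (x :: (l₂ ++ [x])) :=
    walkWeight_nonneg_of_closed hC (h.infix ⟨l₁, l₃, by simp⟩)
  have hsplit := walkWeight_append_cons (γ := γ) (x :: l₂) l₃ x
  simp only [List.cons_append] at hsplit
  rw [walkWeight_append_cons l₁ l₃, walkWeight_append_cons l₁ (l₂ ++ x :: l₃), hsplit]
  linarith

theorem IsWalkSeq.shortcut {l₁ l₂ l₃ : List (Option σ)} {x : Option σ}
    (h : IsWalkSeq (l₁ ++ x :: (l₂ ++ x :: l₃))) : IsWalkSeq (l₁ ++ x :: l₃) :=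
  IsWalkSeq.glue (h.infix ⟨[], l₂ ++ x :: l₃, by simp⟩) (h.infix ⟨l₁ ++ x :: l₂, [], by simp⟩)

theorem le_walkWeight_of_nodup [Finite σ] {M : ℝ} (hM : ∀ p q, M ≤ γ p q) (hM0 : M ≤ 0)
    {W : List (Option σ)} (hW : W.Nodup) : Nat.card (Option σ) * M ≤ walkWeight γ W := by
  set L := (W.zip W.tail).map fun p => γ p.1 p.2 with hL
  have hlen : L.length ≤ Nat.card (Option σ) := by
    simpa [hL] using (Nat.sub_le _ 1).trans hW.length_le_natCard
  have hLM : ∀ y ∈ L, M ≤ y := by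
    simp only [hL, List.mem_map]
    rintro _ ⟨p, -, rfl⟩
    exact hM _ _
  calc (Nat.card (Option σ) : ℝ) * M ≤ L.length * M :=
        mul_le_mul_of_nonpos_right (by exact_mod_cast hlen) hM0
    _ ≤ L.sum := by simpa using L.card_nsmul_le_sum M hLM

/-- Cutting out closed subwalks, which have nonnegative weight, leaves a walk without
repeated vertices. -/
theorem le_walkWeight_of_not_hasNegCycle [Finite σ] (hC : ¬HasNegCycle γ) {M : ℝ}
    (hM : ∀ p q, M ≤ γ p q) (hM0 : M ≤ 0) :
    ∀ W : List (Option σ), IsWalkSeq W → Nat.card (Option σ) * M ≤ walkWeight γ W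
  | W, hW => by
    by_cases hnd : W.Nodup
    · exact le_walkWeight_of_nodup hM hM0 hnd
    obtain ⟨x, l₁, l₂, l₃, rfl⟩ := List.exists_eq_append_cons_append_cons_of_not_nodup hnd
    have : (l₁ ++ x :: l₃).length < (l₁ ++ x :: (l₂ ++ x :: l₃)).length := by simp
    exact (le_walkWeight_of_not_hasNegCycle hC hM hM0 _ hW.shortcut).trans
      (walkWeight_shortcut_le hC hW)
termination_by W => W.length

theorem exists_le_walkWeight [Finite σ] (hC : ¬HasNegCycle γ) :
    ∃ m, ∀ W : List (Option σ), IsWalkSeq W → m ≤ walkWeight γ W := by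
  obtain ⟨p₀, hp₀⟩ := Finite.exists_min fun p : Option σ × Option σ => γ p.1 p.2
  exact ⟨_, le_walkWeight_of_not_hasNegCycle hC (M := min (γ p₀.1 p₀.2) 0)
    (fun p q => (min_le_left _ _).trans (hp₀ (p, q))) (min_le_right _ _)⟩

end LowerBound

section Alignments

theorem isExtCol_iff {c : List (Option σ)} :
    IsExtCol c ↔ c ≠ [] ∧ IsWalkSeq c ∧ ¬(c.head? = some none ∧ c.getLast? = some none) := by
  refine ⟨fun ⟨h0, _, hw, hends⟩ => ⟨h0, hw, hends⟩, fun ⟨h0, hw, hends⟩ => ⟨h0, ?_, hw, hends⟩⟩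
  by_contra! hgaps
  refine hends ⟨?_, ?_⟩
  · rw [List.head?_eq_some_head h0, hgaps _ (List.head_mem h0)]
  · rw [List.getLast?_eq_some_getLast h0, hgaps _ (List.getLast_mem h0)]

theorem IsExtCol.head_or_getLast_ne_gap {c : List (Option σ)} (hc : IsExtCol c) :
    c.head?.bind id ≠ none ∨ c.getLast?.bind id ≠ none := by
  obtain ⟨hc0, -, hends⟩ := isExtCol_iff.1 hc
  rw [List.head?_eq_some_head hc0, List.getLast?_eq_some_getLast hc0] at hends ⊢
  simpa using not_and_or.mp hends

theorem IsExtAlignment.cons {c : List (Option σ)} {E : List (List (Option σ))} {s t : List σ}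
    (hc : IsExtCol c) (hE : IsExtAlignment E s t) :
    IsExtAlignment (c :: E) ((c.head?.bind id).toList ++ s) ((c.getLast?.bind id).toList ++ t) := by
  obtain ⟨hcols, rfl, rfl⟩ := hE
  refine ⟨List.forall_mem_cons.2 ⟨hc, hcols⟩, ?_, ?_⟩ <;>
    simp only [List.filterMap_cons] <;> split <;> simp_all

theorem exists_isExtAlignment (s t : List σ) : ∃ E, IsExtAlignment E s t := by
  induction s with
  | nil =>
    induction t with
    | nil => exact ⟨[], by simp [IsExtAlignment]⟩
    | cons b t ih =>
      obtain ⟨E, hE⟩ := ih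
      have hc : IsExtCol [none, some b] := by simp [isExtCol_iff, isWalkSeq_iff_isChain]
      exact ⟨_, by simpa using hE.cons hc⟩
  | cons a s ih =>
    obtain ⟨E, hE⟩ := ih
    have hc : IsExtCol [some a, none] := by simp [isExtCol_iff, isWalkSeq_iff_isChain]
    exact ⟨_, by simpa using hE.cons hc⟩

def alignWeight (γ : Scoring σ) (E : List (List (Option σ))) : ℝ :=
  (E.map (walkWeight γ)).sum

@[simp]
theorem alignWeight_nil (γ : Scoring σ) : alignWeight γ [] = 0 := rfl

@[simp]
theorem alignWeight_cons (γ : Scoring σ) (c : List (Option σ)) (E : List (List (Option σ))) :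
    alignWeight γ (c :: E) = walkWeight γ c + alignWeight γ E := by
  simp [alignWeight]

/-- Like `IsExtAlignment`, but a column may begin and end with a space; the composition of
two extended alignments is of this kind. -/
def IsWalkAlignment (E : List (List (Option σ))) (s t : List σ) : Prop :=
  (∀ c ∈ E, c ≠ [] ∧ IsWalkSeq c) ∧
  E.filterMap (fun c => c.head?.bind id) = s ∧
  E.filterMap (fun c => c.getLast?.bind id) = t

theorem IsExtAlignment.isWalkAlignment {E : List (List (Option σ))} {s t : List σ}
    (h : IsExtAlignment E s t) : IsWalkAlignment E s t :=
  ⟨fun c hc => ⟨(h.1 c hc).1, (h.1 c hc).2.2.1⟩, h.2⟩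

theorem exists_glued_column (γ : Scoring σ) {c d : List (Option σ)} {a : σ} (hc : IsWalkSeq c)
    (hd : IsWalkSeq d) (hca : c.getLast?.bind id = some a) (hda : d.head?.bind id = some a) :
    ∃ e : List (Option σ), (e ≠ [] ∧ IsWalkSeq e) ∧ e.head?.bind id = c.head?.bind id ∧
      e.getLast?.bind id = d.getLast?.bind id ∧
      walkWeight γ e = walkWeight γ c + walkWeight γ d := by
  obtain ⟨c₀, rfl⟩ : ∃ c₀, c = c₀ ++ [some a] := by
    simpa [Option.bind_eq_some_iff, List.getLast?_eq_some_iff] using hca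
  obtain ⟨d₀, rfl⟩ : ∃ d₀, d = some a :: d₀ := by
    simpa [Option.bind_eq_some_iff, List.head?_eq_some_iff] using hda
  refine ⟨c₀ ++ some a :: d₀, ⟨by simp, hc.glue hd⟩, ?_, ?_, walkWeight_append_cons _ _ _⟩
  · cases c₀ <;> rfl
  · rw [List.getLast?_append_cons]

/-- Composition of alignments: a column of `E₁` ending in a letter is glued to the column of
`E₂` beginning with that letter; all other columns are kept. -/
theorem IsWalkAlignment.trans (γ : Scoring σ) {E₁ E₂ : List (List (Option σ))} {s t u : List σ}
    (h₁ : IsWalkAlignment E₁ s t) (h₂ : IsWalkAlignment E₂ t u) :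
    ∃ E, IsWalkAlignment E s u ∧ alignWeight γ E = alignWeight γ E₁ + alignWeight γ E₂ := by
  obtain ⟨hcols₁, rfl, rfl⟩ := h₁
  obtain ⟨hcols₂, htop₂, rfl⟩ := h₂
  cases E₁ with
  | nil => exact ⟨E₂, ⟨hcols₂, by simpa using htop₂, rfl⟩, by simp⟩
  | cons c E₁ =>
    obtain ⟨hc, hcols₁⟩ := List.forall_mem_cons.1 hcols₁
    rcases hbot : c.getLast?.bind id with _ | a
    · obtain ⟨E, ⟨hcols, htop, hbot'⟩, hw⟩ := IsWalkAlignment.trans γ (E₁ := E₁) (E₂ := E₂)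
        ⟨hcols₁, rfl, rfl⟩ ⟨hcols₂, by simpa only [List.filterMap_cons, hbot] using htop₂, rfl⟩
      refine ⟨c :: E, ⟨List.forall_mem_cons.2 ⟨hc, hcols⟩, ?_, ?_⟩, ?_⟩
      · simp only [List.filterMap_cons, htop]
      · simp only [List.filterMap_cons, hbot, hbot']
      · simp only [alignWeight_cons, hw]; ring
    cases E₂ with
    | nil => simp only [List.filterMap_nil, List.filterMap_cons, hbot] at htop₂; cases htop₂
    | cons d E₂ =>
      obtain ⟨hd, hcols₂⟩ := List.forall_mem_cons.1 hcols₂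
      rcases htop : d.head?.bind id with _ | b
      · obtain ⟨E, ⟨hcols, htop', hbot'⟩, hw⟩ := IsWalkAlignment.trans γ (E₁ := c :: E₁)
          (E₂ := E₂) ⟨List.forall_mem_cons.2 ⟨hc, hcols₁⟩, rfl, rfl⟩
          ⟨hcols₂, by simpa only [List.filterMap_cons, htop] using htop₂, rfl⟩
        refine ⟨d :: E, ⟨List.forall_mem_cons.2 ⟨hd, hcols⟩, ?_, ?_⟩, ?_⟩
        · simp only [List.filterMap_cons, htop, htop']
        · simp only [List.filterMap_cons, hbot']
        · simp only [alignWeight_cons, hw]; ring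
      simp only [List.filterMap_cons, hbot, htop, List.cons.injEq] at htop₂
      obtain ⟨rfl, htop₂⟩ := htop₂
      obtain ⟨e, he, htop_e, hbot_e, hw_e⟩ := exists_glued_column γ hc.2 hd.2 hbot htop
      obtain ⟨E, ⟨hcols, htop', hbot'⟩, hw⟩ := IsWalkAlignment.trans γ (E₁ := E₁) (E₂ := E₂)
        ⟨hcols₁, rfl, rfl⟩ ⟨hcols₂, htop₂, rfl⟩
      refine ⟨e :: E, ⟨List.forall_mem_cons.2 ⟨he, hcols⟩, ?_, ?_⟩, ?_⟩
      · simp only [List.filterMap_cons, htop_e, htop']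
      · simp only [List.filterMap_cons, hbot_e, hbot']
      · simp only [alignWeight_cons, hw, hw_e]; ring
termination_by E₁.length + E₂.length

end Alignments

section NoNegCycle

variable {γ : Scoring σ}

theorem walkWeight_nonneg_of_gap_ends (hC : ¬HasNegCycle γ) {c : List (Option σ)}
    (hc : IsWalkSeq c) (hhead : c.head? = some none) (hlast : c.getLast? = some none) :
    0 ≤ walkWeight γ c := by
  obtain ⟨c, rfl⟩ := List.head?_eq_some_iff.mp hhead
  rcases List.eq_nil_or_concat c with rfl | ⟨v, x, rfl⟩
  · simp
  · rw [List.concat_eq_append] at hc hlast ⊢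
    obtain rfl : x = none := by
      simpa only [← List.cons_append, List.getLast?_concat, Option.some.injEq] using hlast
    exact walkWeight_nonneg_of_closed hC hc

/-- Columns that begin and end with a space are closed walks through the gap, so they have
nonnegative weight and can be dropped. -/
theorem IsWalkAlignment.exists_isExtAlignment_le (hC : ¬HasNegCycle γ)
    {E : List (List (Option σ))} {s t : List σ} (h : IsWalkAlignment E s t) :
    ∃ E', IsExtAlignment E' s t ∧ alignWeight γ E' ≤ alignWeight γ E := by
  obtain ⟨hcols, rfl, rfl⟩ := h
  induction E with
  | nil => exact ⟨[], ⟨by simp, rfl, rfl⟩, le_rfl⟩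
  | cons c E ih =>
    obtain ⟨⟨hc0, hc⟩, hcols⟩ := List.forall_mem_cons.1 hcols
    obtain ⟨E', ⟨hcols', htop, hbot⟩, hw⟩ := ih hcols
    by_cases hgaps : c.head? = some none ∧ c.getLast? = some none
    · refine ⟨E', ⟨hcols', ?_, ?_⟩, ?_⟩
      · simp only [List.filterMap_cons, hgaps.1, Option.bind_some]
        exact htop
      · simp only [List.filterMap_cons, hgaps.2, Option.bind_some]
        exact hbot
      · have := walkWeight_nonneg_of_gap_ends hC hc hgaps.1 hgaps.2
        simp only [alignWeight_cons]
        linarith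
    · refine ⟨c :: E', ⟨List.forall_mem_cons.2 ⟨isExtCol_iff.2 ⟨hc0, hc, hgaps⟩, hcols'⟩, ?_, ?_⟩, ?_⟩
      · simp only [List.filterMap_cons, htop]
      · simp only [List.filterMap_cons, hbot]
      · simp only [alignWeight_cons]
        linarith

end NoNegCycle

section Scores

variable {γ : Scoring σ}

def extScores (γ : Scoring σ) (s t : List σ) : Set ℝ :=
  alignWeight γ '' {E | IsExtAlignment E s t}

theorem edist_eq_sInf_extScores (γ : Scoring σ) (s t : List σ) :
    edist γ s t = sInf (extScores γ s t) := rfl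

theorem extScores_nonempty (γ : Scoring σ) (s t : List σ) : (extScores γ s t).Nonempty :=
  let ⟨E, hE⟩ := exists_isExtAlignment s t
  ⟨_, E, hE, rfl⟩

theorem IsExtAlignment.length_le {E : List (List (Option σ))} {s t : List σ}
    (h : IsExtAlignment E s t) : E.length ≤ s.length + t.length := by
  obtain ⟨hcols, rfl, rfl⟩ := h
  exact List.length_le_length_filterMap_add fun c hc => (hcols c hc).head_or_getLast_ne_gap

theorem bddBelow_extScores [Finite σ] (hC : ¬HasNegCycle γ) (s t : List σ) :
    BddBelow (extScores γ s t) := by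
  obtain ⟨m, hm⟩ := exists_le_walkWeight hC
  have hm0 : m ≤ 0 := by simpa using hm [] (by simp [isWalkSeq_iff_isChain])
  refine ⟨(s.length + t.length : ℕ) * m, ?_⟩
  rintro _ ⟨E, hE, rfl⟩
  have hcols : ∀ w ∈ E.map (walkWeight γ), m ≤ w := by
    simp only [List.mem_map]
    rintro _ ⟨c, hc, rfl⟩
    exact hm c (isExtCol_iff.1 (hE.1 c hc)).2.1
  calc ((s.length + t.length : ℕ) : ℝ) * m ≤ E.length * m :=
        mul_le_mul_of_nonpos_right (by exact_mod_cast hE.length_le) hm0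
    _ ≤ alignWeight γ E := by
        simpa [alignWeight] using (E.map (walkWeight γ)).card_nsmul_le_sum m hcols

theorem edist_triangle_of_not_hasNegCycle [Finite σ] (hC : ¬HasNegCycle γ) (s t u : List σ) :
    edist γ s u ≤ edist γ s t + edist γ t u := by
  simp only [edist_eq_sInf_extScores]
  rw [← csInf_add (extScores_nonempty γ s t) (bddBelow_extScores hC s t)
    (extScores_nonempty γ t u) (bddBelow_extScores hC t u)]
  refine le_csInf ((extScores_nonempty γ s t).add (extScores_nonempty γ t u)) ?_
  rintro _ ⟨_, ⟨E₁, h₁, rfl⟩, _, ⟨E₂, h₂, rfl⟩, rfl⟩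
  obtain ⟨E, hE, hw⟩ := h₁.isWalkAlignment.trans γ h₂.isWalkAlignment
  obtain ⟨E', hE', hw'⟩ := hE.exists_isExtAlignment_le hC
  exact (csInf_le (bddBelow_extScores hC s u) ⟨E', hE', rfl⟩).trans (hw'.trans hw.le)

end Scores

section NegCycle

variable {γ : Scoring σ}

def cycleIterate (z : Option σ) (v : List (Option σ)) (k : ℕ) : List (Option σ) :=
  z :: (List.replicate k (v ++ [z])).flatten

theorem cycleIterate_succ (z : Option σ) (v : List (Option σ)) (k : ℕ) :
    cycleIterate z v (k + 1) = z :: v ++ cycleIterate z v k := by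
  simp [cycleIterate, List.replicate_succ]

theorem exists_cycleIterate_eq_append (z : Option σ) (v : List (Option σ)) (k : ℕ) :
    ∃ c, cycleIterate z v k = c ++ [z] := by
  induction k with
  | zero => exact ⟨[], rfl⟩
  | succ k ih =>
    obtain ⟨c, hc⟩ := ih
    exact ⟨z :: v ++ c, by rw [cycleIterate_succ, hc, List.append_assoc]⟩

theorem IsWalkSeq.cycleIterate {z : Option σ} {v : List (Option σ)}
    (h : IsWalkSeq (z :: (v ++ [z]))) (k : ℕ) : IsWalkSeq (cycleIterate z v k) := by
  induction k with
  | zero => simp [_root_.cycleIterate, isWalkSeq_iff_isChain]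
  | succ k ih =>
    rw [cycleIterate_succ]
    exact IsWalkSeq.glue (l₁ := z :: v) h ih

theorem walkWeight_cycleIterate (z : Option σ) (v : List (Option σ)) (k : ℕ) :
    walkWeight γ (cycleIterate z v k) = k * walkWeight γ (z :: (v ++ [z])) := by
  induction k with
  | zero => simp [cycleIterate]
  | succ k ih =>
    rw [cycleIterate_succ, cycleIterate, walkWeight_append_cons (z :: v), ← cycleIterate, ih]
    push_cast
    simp only [List.cons_append]
    ring

theorem exists_pumped_column {a : σ} {v : List (Option σ)}
    (h : IsWalkSeq (some a :: (v ++ [some a]))) {p q : Option σ} (hpq : ¬(p = none ∧ q = none))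
    (k : ℕ) : ∃ c, IsExtCol c ∧ c.head? = some p ∧ c.getLast? = some q ∧
      walkWeight γ c = γ p (some a) + k * walkWeight γ (some a :: (v ++ [some a])) +
        γ (some a) q := by
  have hwalk : IsWalkSeq (p :: cycleIterate (some a) v k) := by
    rw [isWalkSeq_iff_isChain, cycleIterate, List.isChain_cons_cons]
    exact ⟨by simp, h.cycleIterate k⟩
  have hweight : walkWeight γ (p :: cycleIterate (some a) v k) =
      γ p (some a) + k * walkWeight γ (some a :: (v ++ [some a])) := by
    rw [cycleIterate, walkWeight_cons_cons, ← cycleIterate, walkWeight_cycleIterate]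
  obtain ⟨c₀, hc₀⟩ := exists_cycleIterate_eq_append (some a) v k
  rw [hc₀, ← List.cons_append] at hwalk hweight
  have hlast : ((p :: c₀) ++ some a :: [q]).getLast? = some q := by
    rw [List.getLast?_append_cons]; rfl
  refine ⟨(p :: c₀) ++ some a :: [q], ?_, rfl, hlast, ?_⟩
  · refine isExtCol_iff.2 ⟨by simp, hwalk.glue (by simp [isWalkSeq_iff_isChain]), ?_⟩
    rw [hlast]
    simpa using hpq
  · rw [walkWeight_append_cons, hweight]
    simp

/-- Pumping a negative cycle inside one column makes the score arbitrarily small. -/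
theorem not_bddBelow_extScores (hC : HasNegCycle γ) {s t : List σ} (hst : s ≠ [] ∨ t ≠ []) :
    ¬BddBelow (extScores γ s t) := by
  obtain ⟨a, v, hwalk, hneg⟩ := hC
  obtain ⟨p, q, s', t', hpq, rfl, rfl⟩ :
      ∃ p q s' t', ¬(p = none ∧ q = none) ∧ s = p.toList ++ s' ∧ t = q.toList ++ t' := by
    rcases s with _ | ⟨x, s'⟩
    · rcases t with _ | ⟨y, t'⟩
      · simp at hst
      · exact ⟨none, some y, [], t', by simp, rfl, rfl⟩
    · exact ⟨some x, none, s', t, by simp, rfl, rfl⟩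
  obtain ⟨E, hE⟩ := exists_isExtAlignment s' t'
  set w := walkWeight γ (some a :: (v ++ [some a]))
  have hmem (k : ℕ) : γ p (some a) + k * w + γ (some a) q + alignWeight γ E ∈
      extScores γ (p.toList ++ s') (q.toList ++ t') := by
    obtain ⟨c, hc, hhead, hlast, hweight⟩ := exists_pumped_column (γ := γ) hwalk hpq k
    refine ⟨c :: E, ?_, by rw [alignWeight_cons, hweight]⟩
    simpa [hhead, hlast] using hE.cons hc
  rw [not_bddBelow_iff]
  intro b
  obtain ⟨k, hk⟩ := exists_nat_gt ((γ p (some a) + γ (some a) q + alignWeight γ E - b) / -w)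
  refine ⟨_, hmem k, ?_⟩
  have := (div_lt_iff₀ (neg_pos.2 hneg)).1 hk
  linarith

theorem IsExtAlignment.eq_nil {E : List (List (Option σ))} (h : IsExtAlignment E [] []) :
    E = [] := by
  obtain ⟨hcols, htop, hbot⟩ := h
  cases E with
  | nil => rfl
  | cons c E =>
    rcases (hcols c List.mem_cons_self).head_or_getLast_ne_gap with hc | hc
    · exact absurd ((List.filterMap_eq_nil_iff.1 htop) c List.mem_cons_self) hc
    · exact absurd ((List.filterMap_eq_nil_iff.1 hbot) c List.mem_cons_self) hc

theorem edist_nil_nil (γ : Scoring σ) : edist γ [] [] = 0 := by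
  have : extScores γ [] [] = {0} := by
    refine Set.eq_singleton_iff_unique_mem.2 ⟨⟨[], ⟨by simp, rfl, rfl⟩, rfl⟩, ?_⟩
    rintro _ ⟨E, hE, rfl⟩
    rw [hE.eq_nil, alignWeight_nil]
  rw [edist_eq_sInf_extScores, this, csInf_singleton]

/-- Except for `edist γ [] [] = 0`, every `edist` is then the infimum of a set unbounded below,
which `sInf` sends to `0`. -/
theorem edist_eq_zero_of_hasNegCycle (hC : HasNegCycle γ) (s t : List σ) : edist γ s t = 0 := by
  by_cases hst : s = [] ∧ t = []
  · rw [hst.1, hst.2, edist_nil_nil]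
  · exact Real.sInf_of_not_bddBelow (not_bddBelow_extScores hC (not_and_or.1 hst))

end NegCycle

end

theorem stmt19 {σ : Type*} [Fintype σ] (γ : Scoring σ) (s t u : List σ) :
    edist γ s u ≤ edist γ s t + edist γ t u := by
  by_cases hC : HasNegCycle γ
  · simp only [edist_eq_zero_of_hasNegCycle hC, add_zero, le_refl]
  · exact edist_triangle_of_not_hasNegCycle hC s t u
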